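/- Suppose 𝓕 = ⟨F_0, …, F_k⟩ is P-sharp in U, and let C_0, …, C_{m−1} be pairwise disjoint subsets of P, each closed in the subspace P. Then there are at most k + 1 indices l < m for which there is no open set U' ⊆ U such that 𝓕 is (P ∖ C_l)-sharp in U'. -/

import Mathlib

open Set Topology

/-- A set is `Σ⁰₂` (Fσ) if it is a countable union of closed sets. -/
def IsFsigma {X : Type*} [TopologicalSpace X] (A : Set X) : Prop :=
  ∃ F : ℕ → Set X, (∀ n, IsClosed (F n)) ∧ A = ⋃ n, F n

/-- A set is `Σ⁰₃` if it is a countable union of Gδ sets. -/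
def IsSigma03 {X : Type*} [TopologicalSpace X] (A : Set X) : Prop :=
  ∃ G : ℕ → Set X, (∀ n, IsGδ (G n)) ∧ A = ⋃ n, G n

/-- A set is `Δ⁰₃` if both it and its complement are `Σ⁰₃`. -/
def IsDelta03 {X : Type*} [TopologicalSpace X] (A : Set X) : Prop :=
  IsSigma03 A ∧ IsSigma03 Aᶜ

/-- `Σ⁰₂`-measurable function: preimages of open sets are Fσ. -/
def Sigma2Measurable {X Y : Type*} [TopologicalSpace X] [TopologicalSpace Y]
    (f : X → Y) : Prop :=
  ∀ U : Set Y, IsOpen U → IsFsigma (f ⁻¹' U)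

/-- `Σ⁰₃`-measurable function: preimages of open sets are `Σ⁰₃`. -/
def Sigma3Measurable {X Y : Type*} [TopologicalSpace X] [TopologicalSpace Y]
    (f : X → Y) : Prop :=
  ∀ U : Set Y, IsOpen U → IsSigma03 (f ⁻¹' U)

/-- `f ∈ dec(Σ⁰₂, Δ⁰₃)`: there is a countable partition of the domain into `Δ⁰₃` pieces
on each of which `f` restricts (with the subspace topology) to a `Σ⁰₂`-measurable function. -/
def DecSigma2 {X Y : Type*} [TopologicalSpace X] [TopologicalSpace Y]
    (f : X → Y) : Prop :=
  ∃ A : ℕ → Set X, (∀ m n, m ≠ n → Disjoint (A m) (A n)) ∧ (⋃ n, A n) = Set.univ ∧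
    (∀ n, IsDelta03 (A n)) ∧ ∀ n, Sigma2Measurable ((A n).restrict f)

/-- `f ∈ dec(Σ⁰₁, Δ⁰₃)`: there is a countable partition of the domain into `Δ⁰₃` pieces
on each of which `f` restricts (with the subspace topology) to a continuous function. -/
def DecCont {X Y : Type*} [TopologicalSpace X] [TopologicalSpace Y]
    (f : X → Y) : Prop :=
  ∃ A : ℕ → Set X, (∀ m n, m ≠ n → Disjoint (A m) (A n)) ∧ (⋃ n, A n) = Set.univ ∧
    (∀ n, IsDelta03 (A n)) ∧ ∀ n, Continuous ((A n).restrict f)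

/-- `⟨F₀⟩` is `P`-sharp in `U` (base case of the sharpness notion for `dec(Σ⁰₂, Δ⁰₃)`). -/
def Sharp0 {X Y : Type*} [TopologicalSpace X] [TopologicalSpace Y]
    (f : X → Y) (P : Set Y) (F0 U : Set X) : Prop :=
  (U ∩ F0).Nonempty ∧ ∀ U' : Set X, IsOpen U' → U' ⊆ U → (U' ∩ F0).Nonempty →
    ¬ DecSigma2 ((f ⁻¹' P ∩ F0 ∩ U').restrict f)

/-- `⟨F 0, …, F k⟩` is `P`-sharp in `U`. -/
def Sharp {X Y : Type*} [TopologicalSpace X] [TopologicalSpace Y]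
    (f : X → Y) (P : Set Y) (F : ℕ → Set X) : ℕ → Set X → Prop
  | 0, U => Sharp0 f P (F 0) U
  | (k+1), U => Sharp0 f P (F (k+1)) U ∧
      ∀ U' : Set X, IsOpen U' → U' ⊆ U → (U' ∩ F (k+1)).Nonempty →
        ∃ U'' : Set X, IsOpen U'' ∧ U'' ⊆ U' ∧ Sharp f P F k U''


/-!
Induction on `k`. The heart of the matter is that two disjoint relatively closed sets
`C₁, C₂ ⊆ P` cannot both destroy the sharpness of `⟨F₀⟩` everywhere in `W`: otherwise there are
nested open sets `V₂ ⊆ V₁ ⊆ W` meeting `F₀` such that `f` restricted to `f⁻¹(P \ C₁) ∩ F₀ ∩ V₁`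
and to `f⁻¹(P \ C₂) ∩ F₀ ∩ V₂` is in `dec(Σ⁰₂, Δ⁰₃)`. As `P \ Cᵢ` is relatively open in `P` and
`f` is `Σ⁰₃`-measurable, these two pieces are `Σ⁰₃` in `f⁻¹(P) ∩ F₀ ∩ V₂` and cover it; writing
them as countable unions of `Gδ` sets and disjointifying gives a partition into `Δ⁰₃` sets
(closed sets being `Gδ`), so `f` would be decomposable on `f⁻¹(P) ∩ F₀ ∩ V₂` after all.

For `k + 1`, an index `l` for which `P \ C_l` is `⟨F_{k+1}⟩`-sharp in some `V` but `𝓕` is nowhere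
`(P \ C_l)`-sharp must violate the recursive clause in `V`, which yields a smaller open set
meeting `F_{k+1}` in which `⟨F₀, …, F_k⟩` is nowhere `(P \ C_l)`-sharp. Repeating this until at
most one index is left, and then shrinking once more to an open set where `⟨F₀, …, F_k⟩` is
`P`-sharp, the induction hypothesis bounds the remaining indices by `k + 1`.
-/

open Function

section BorelClasses

variable {α β : Type*} [TopologicalSpace α] [TopologicalSpace β]

lemma IsGδ.isSigma03 {s : Set α} (h : IsGδ s) : IsSigma03 s :=
  ⟨fun _ => s, fun _ => h, (iUnion_const s).symm⟩

lemma IsSigma03.iUnion {ι : Type*} [Countable ι] {s : ι → Set α} (h : ∀ i, IsSigma03 (s i)) :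
    IsSigma03 (⋃ i, s i) := by
  choose G hG hs using h
  rcases isEmpty_or_nonempty ι with hι | hι
  · rw [iUnion_of_empty]
    exact IsGδ.empty.isSigma03
  obtain ⟨g, hg⟩ := exists_surjective_nat (ι × ℕ)
  refine ⟨fun n => G (g n).1 (g n).2, fun n => hG _ _, ?_⟩
  rw [hg.iUnion_comp (fun p => G p.1 p.2), iUnion_prod']
  exact iUnion_congr hs

lemma IsSigma03.union {s t : Set α} (hs : IsSigma03 s) (ht : IsSigma03 t) :
    IsSigma03 (s ∪ t) := by
  rw [union_eq_iUnion]
  exact .iUnion fun b => by cases b <;> assumption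

lemma IsSigma03.inter {s t : Set α} (hs : IsSigma03 s) (ht : IsSigma03 t) :
    IsSigma03 (s ∩ t) := by
  obtain ⟨G, hG, rfl⟩ := hs
  obtain ⟨K, hK, rfl⟩ := ht
  rw [iUnion_inter_iUnion]
  exact .iUnion fun i => .iUnion fun j => ((hG i).inter (hK j)).isSigma03

lemma IsSigma03.preimage {e : β → α} (he : Continuous e) {s : Set α} (h : IsSigma03 s) :
    IsSigma03 (e ⁻¹' s) := by
  obtain ⟨G, hG, rfl⟩ := h
  exact ⟨fun n => e ⁻¹' G n, fun n => (hG n).preimage he, preimage_iUnion⟩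

lemma IsSigma03.exists_eq_preimage_val {S : Set α} {T : Set S} (h : IsSigma03 T) :
    ∃ A : Set α, IsSigma03 A ∧ T = Subtype.val ⁻¹' A := by
  obtain ⟨G, hG, rfl⟩ := h
  have hGδ : ∀ n, ∃ H : Set α, IsGδ H ∧ G n = Subtype.val ⁻¹' H := fun n => by
    obtain ⟨g, hgo, hg⟩ := isGδ_iff_eq_iInter_nat.1 (hG n)
    choose V hVo hV using fun i => isOpen_induced_iff.1 (hgo i)
    exact ⟨⋂ i, V i, .iInter_of_isOpen hVo, by rw [hg, preimage_iInter]; simp only [hV]⟩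
  choose H hH hGH using hGδ
  exact ⟨⋃ n, H n, .iUnion fun n => (hH n).isSigma03, by rw [preimage_iUnion]; simp only [hGH]⟩

lemma IsDelta03.compl {s : Set α} (h : IsDelta03 s) : IsDelta03 sᶜ :=
  ⟨h.2, by rw [compl_compl]; exact h.1⟩

lemma IsDelta03.inter {s t : Set α} (hs : IsDelta03 s) (ht : IsDelta03 t) :
    IsDelta03 (s ∩ t) :=
  ⟨hs.1.inter ht.1, by rw [compl_inter]; exact hs.2.union ht.2⟩

lemma IsDelta03.diff {s t : Set α} (hs : IsDelta03 s) (ht : IsDelta03 t) :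
    IsDelta03 (s \ t) :=
  hs.inter ht.compl

lemma IsDelta03.preimage {e : β → α} (he : Continuous e) {s : Set α} (h : IsDelta03 s) :
    IsDelta03 (e ⁻¹' s) :=
  ⟨h.1.preimage he, by rw [← preimage_compl]; exact h.2.preimage he⟩

lemma IsDelta03.image_val {S : Set α} (hS : IsDelta03 S) {T : Set S} (hT : IsDelta03 T) :
    IsDelta03 (Subtype.val '' T) := by
  obtain ⟨A, hA, hTA⟩ := hT.1.exists_eq_preimage_val
  obtain ⟨B, hB, hTB⟩ := hT.2.exists_eq_preimage_val
  have hcompl : (Subtype.val '' T)ᶜ = Sᶜ ∪ S ∩ B := by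
    rw [← Subtype.image_preimage_coe, ← hTB, image_val_compl]
    have hTS := Subtype.coe_image_subset S T
    ext x
    by_cases hx : x ∈ S <;> simp only [mem_compl_iff, mem_union, mem_sdiff, hx] <;> tauto
  have himage : Subtype.val '' T = S ∩ A := by rw [hTA, Subtype.image_preimage_coe]
  exact ⟨himage ▸ hS.1.inter hA, hcompl ▸ hS.2.union (hS.1.inter hB)⟩

lemma IsGδ.isDelta03 [PerfectlyNormalSpace α] {s : Set α} (h : IsGδ s) : IsDelta03 s := by
  refine ⟨h.isSigma03, ?_⟩
  obtain ⟨g, hgo, rfl⟩ := isGδ_iff_eq_iInter_nat.1 h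
  rw [compl_iInter]
  exact .iUnion fun n => (hgo n).isClosed_compl.isGδ.isSigma03

end BorelClasses

section Decomposable

variable {α β γ : Type*} [TopologicalSpace α] [TopologicalSpace β] [TopologicalSpace γ]

lemma IsFsigma.preimage {e : γ → α} (he : Continuous e) {s : Set α} (h : IsFsigma s) :
    IsFsigma (e ⁻¹' s) := by
  obtain ⟨F, hF, rfl⟩ := h
  exact ⟨fun n => e ⁻¹' F n, fun n => (hF n).preimage he, preimage_iUnion⟩

lemma Sigma2Measurable.comp {g : α → β} {e : γ → α} (hg : Sigma2Measurable g)
    (he : Continuous e) : Sigma2Measurable (g ∘ e) :=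
  fun U hU => (hg U hU).preimage he

lemma Sigma2Measurable.restrict_image_val {f : α → β} {S : Set α} {T : Set S}
    (h : Sigma2Measurable (T.restrict (S.restrict f))) :
    Sigma2Measurable ((Subtype.val '' T).restrict f) := by
  have hmem (x : Subtype.val '' T) : ∃ hxS : x.1 ∈ S, (⟨x.1, hxS⟩ : S) ∈ T := by
    simpa only [Subtype.coe_image, mem_ofPred_eq] using x.2
  exact h.comp (e := fun x => ⟨⟨x.1, (hmem x).1⟩, (hmem x).2⟩)
    ((continuous_subtype_val.subtype_mk _).subtype_mk _)

lemma DecSigma2.comp {g : α → β} {e : γ → α} (hg : DecSigma2 g) (he : Continuous e) :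
    DecSigma2 (g ∘ e) := by
  obtain ⟨A, hdisj, hcov, hA, hgA⟩ := hg
  refine ⟨fun n => e ⁻¹' A n, fun m n h => (hdisj m n h).preimage e,
    by rw [← preimage_iUnion, hcov, preimage_univ], fun n => (hA n).preimage he, fun n => ?_⟩
  exact (hgA n).comp (e := fun x : e ⁻¹' A n => ⟨e x, x.2⟩)
    ((he.comp continuous_subtype_val).subtype_mk _)

lemma DecSigma2.mono {f : α → β} {A B : Set α} (hBA : B ⊆ A) (h : DecSigma2 (A.restrict f)) :
    DecSigma2 (B.restrict f) :=
  h.comp (continuous_inclusion hBA)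

lemma DecSigma2.of_partition {f : α → β} {B : ℕ → Set α} (hdisj : Pairwise (Disjoint on B))
    (hcov : ⋃ n, B n = univ) (hB : ∀ n, IsDelta03 (B n))
    (hdec : ∀ n, DecSigma2 ((B n).restrict f)) : DecSigma2 f := by
  choose A hAdisj hAcov hA hfA using hdec
  let D : ℕ × ℕ → Set α := fun p => Subtype.val '' A p.1 p.2
  have hDdisj : Pairwise (Disjoint on D) := by
    rintro ⟨n, i⟩ ⟨n', i'⟩ hne
    by_cases hn : n = n'
    · subst hn
      exact (disjoint_image_iff Subtype.val_injective).2 (hAdisj n i i' fun h => hne (by rw [h]))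
    · exact (hdisj hn).mono (Subtype.coe_image_subset _ _) (Subtype.coe_image_subset _ _)
  refine ⟨fun n => D (Nat.pairEquiv.symm n),
    hDdisj.comp_of_injective Nat.pairEquiv.symm.injective, ?_,
    fun p => (hB _).image_val (hA _ _), fun p => (hfA _ _).restrict_image_val⟩
  rw [Nat.pairEquiv.symm.surjective.iUnion_comp D, iUnion_prod']
  simp only [D, ← image_iUnion, hAcov, image_univ, Subtype.range_coe]
  exact hcov

lemma DecSigma2.of_iUnion_isGδ [PerfectlyNormalSpace α] {f : α → β} {G : ℕ → Set α}
    (hG : ∀ n, IsGδ (G n)) (hcov : ⋃ n, G n = univ) (hdec : ∀ n, DecSigma2 ((G n).restrict f)) :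
    DecSigma2 f := by
  refine .of_partition (disjoint_disjointed G) (iUnion_disjointed.trans hcov) (fun n => ?_)
    fun n => (hdec n).mono (disjointed_subset G n)
  exact disjointedRec (fun t i ht => ht.diff (hG i).isDelta03) (hG n).isDelta03

lemma DecSigma2.of_union_isSigma03 [PerfectlyNormalSpace α] {f : α → β} {A₁ A₂ : Set α}
    (h₁ : IsSigma03 A₁) (h₂ : IsSigma03 A₂) (hcov : A₁ ∪ A₂ = univ)
    (hdec₁ : DecSigma2 (A₁.restrict f)) (hdec₂ : DecSigma2 (A₂.restrict f)) : DecSigma2 f := by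
  obtain ⟨G₁, hG₁, rfl⟩ := h₁
  obtain ⟨G₂, hG₂, rfl⟩ := h₂
  have hpiece : ∀ s : ℕ ⊕ ℕ, IsGδ (Sum.elim G₁ G₂ s) ∧
      DecSigma2 ((Sum.elim G₁ G₂ s).restrict f)
    | .inl i => ⟨hG₁ i, hdec₁.mono (subset_iUnion G₁ i)⟩
    | .inr i => ⟨hG₂ i, hdec₂.mono (subset_iUnion G₂ i)⟩
  let e := Equiv.natSumNatEquivNat.symm
  refine .of_iUnion_isGδ (fun n => (hpiece (e n)).1) ?_ fun n => (hpiece (e n)).2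
  rwa [e.surjective.iUnion_comp (Sum.elim G₁ G₂), iUnion_sum]

end Decomposable

section Sharpness

variable {X Y : Type*} [TopologicalSpace X] [TopologicalSpace Y]

lemma DecSigma2.restrict_of_isOpen_cover [PerfectlyNormalSpace X] {f : X → Y}
    (hf : Sigma3Measurable f) {O₁ O₂ : Set Y} (hO₁ : IsOpen O₁) (hO₂ : IsOpen O₂) {S : Set X}
    (hS : S ⊆ f ⁻¹' (O₁ ∪ O₂)) (h₁ : DecSigma2 ((S ∩ f ⁻¹' O₁).restrict f))
    (h₂ : DecSigma2 ((S ∩ f ⁻¹' O₂).restrict f)) : DecSigma2 (S.restrict f) := by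
  have hpiece {O : Set Y} (hO : IsOpen O) (h : DecSigma2 ((S ∩ f ⁻¹' O).restrict f)) :
      IsSigma03 (S.restrict f ⁻¹' O) ∧ DecSigma2 ((S.restrict f ⁻¹' O).restrict (S.restrict f)) :=
    ⟨(hf O hO).preimage continuous_subtype_val,
      by exact h.comp (e := fun z : S.restrict f ⁻¹' O => ⟨z.1.1, z.1.2, z.2⟩) (by fun_prop)⟩
  exact .of_union_isSigma03 (hpiece hO₁ h₁).1 (hpiece hO₂ h₂).1
    (eq_univ_of_forall fun z => hS z.2) (hpiece hO₁ h₁).2 (hpiece hO₂ h₂).2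

lemma Sharp0.mono {f : X → Y} {P : Set Y} {F₀ U V : Set X} (h : Sharp0 f P F₀ U) (hVU : V ⊆ U)
    (hne : (V ∩ F₀).Nonempty) : Sharp0 f P F₀ V :=
  ⟨hne, fun U' hU' hU'V => h.2 U' hU' (hU'V.trans hVU)⟩

lemma Sharp0.exists_sharp0_diff_or [PerfectlyNormalSpace X] {f : X → Y}
    (hf : Sigma3Measurable f) {P C₁ C₂ : Set Y} {F₀ W : Set X} (h : Sharp0 f P F₀ W)
    (hW : IsOpen W) (hC : Disjoint C₁ C₂) (hC₁ : IsClosed (Subtype.val ⁻¹' C₁ : Set P))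
    (hC₂ : IsClosed (Subtype.val ⁻¹' C₂ : Set P)) :
    (∃ V, IsOpen V ∧ V ⊆ W ∧ Sharp0 f (P \ C₁) F₀ V) ∨
      ∃ V, IsOpen V ∧ V ⊆ W ∧ Sharp0 f (P \ C₂) F₀ V := by
  by_contra! hnot
  obtain ⟨hnot₁, hnot₂⟩ := hnot
  obtain ⟨V₁, hV₁, hV₁W, hV₁ne, hdec₁⟩ : ∃ V₁, IsOpen V₁ ∧ V₁ ⊆ W ∧ (V₁ ∩ F₀).Nonempty ∧
      DecSigma2 ((f ⁻¹' (P \ C₁) ∩ F₀ ∩ V₁).restrict f) := by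
    simpa [Sharp0, h.1] using hnot₁ W hW subset_rfl
  obtain ⟨V₂, hV₂, hV₂V₁, hV₂ne, hdec₂⟩ : ∃ V₂, IsOpen V₂ ∧ V₂ ⊆ V₁ ∧ (V₂ ∩ F₀).Nonempty ∧
      DecSigma2 ((f ⁻¹' (P \ C₂) ∩ F₀ ∩ V₂).restrict f) := by
    simpa [Sharp0, hV₁ne] using hnot₂ V₁ hV₁ hV₁W
  obtain ⟨D₁, hD₁, hD₁C₁⟩ := isClosed_induced_iff.1 hC₁
  obtain ⟨D₂, hD₂, hD₂C₂⟩ := isClosed_induced_iff.1 hC₂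
  have hiff {D C : Set Y} (hDC : (Subtype.val ⁻¹' D : Set P) = Subtype.val ⁻¹' C) {y : Y}
      (hy : y ∈ P) : y ∈ D ↔ y ∈ C :=
    Set.ext_iff.1 hDC ⟨y, hy⟩
  refine h.2 V₂ hV₂ (hV₂V₁.trans hV₁W) hV₂ne
    (.restrict_of_isOpen_cover hf hD₁.isOpen_compl hD₂.isOpen_compl ?_ (hdec₁.mono ?_)
      (hdec₂.mono ?_))
  · rintro x ⟨⟨hxP, -⟩, -⟩
    by_contra! hx
    simp only [mem_preimage, mem_union, mem_compl_iff, not_or, not_not] at hx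
    exact hC.ne_of_mem ((hiff hD₁C₁ hxP).1 hx.1) ((hiff hD₂C₂ hxP).1 hx.2) rfl
  · rintro x ⟨⟨⟨hxP, hxF⟩, hxV⟩, hxD⟩
    exact ⟨⟨⟨hxP, fun hxC => hxD ((hiff hD₁C₁ hxP).2 hxC)⟩, hxF⟩, hV₂V₁ hxV⟩
  · rintro x ⟨⟨⟨hxP, hxF⟩, hxV⟩, hxD⟩
    exact ⟨⟨⟨hxP, fun hxC => hxD ((hiff hD₂C₂ hxP).2 hxC)⟩, hxF⟩, hxV⟩

lemma Sharp0.card_le_one [PerfectlyNormalSpace X] {f : X → Y} (hf : Sigma3Measurable f)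
    {P : Set Y} {F₀ W : Set X} (h : Sharp0 f P F₀ W) (hW : IsOpen W) {ι : Type*}
    {C : ι → Set Y} (hC : Pairwise (Disjoint on C))
    (hCcl : ∀ l, IsClosed (Subtype.val ⁻¹' C l : Set P)) {s : Finset ι}
    (hs : ∀ l ∈ s, ¬ ∃ V, IsOpen V ∧ V ⊆ W ∧ Sharp0 f (P \ C l) F₀ V) : s.card ≤ 1 :=
  Finset.card_le_one.2 fun a ha b hb => by
    by_contra hab
    exact (h.exists_sharp0_diff_or hf hW (hC hab) (hCcl a) (hCcl b)).elim (hs a ha) (hs b hb)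

lemma Sharp0.exists_open_subset_not_sharp [PerfectlyNormalSpace X] {f : X → Y}
    (hf : Sigma3Measurable f) {P : Set Y} {F : ℕ → Set X} {k : ℕ} {ι : Type*} {C : ι → Set Y}
    (hC : Pairwise (Disjoint on C)) (hCcl : ∀ l, IsClosed (Subtype.val ⁻¹' C l : Set P))
    (s : Finset ι) {W : Set X} (h : Sharp0 f P (F (k + 1)) W) (hW : IsOpen W)
    (hs : ∀ l ∈ s, ¬ ∃ V, IsOpen V ∧ V ⊆ W ∧ Sharp f (P \ C l) F (k + 1) V) :
    ∃ W', IsOpen W' ∧ W' ⊆ W ∧ (W' ∩ F (k + 1)).Nonempty ∧ ∃ s' ⊆ s, s.card ≤ s'.card + 1 ∧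
      ∀ l ∈ s', ¬ ∃ V, IsOpen V ∧ V ⊆ W' ∧ Sharp f (P \ C l) F k V := by
  classical
  induction s using Finset.strongInduction generalizing W with
  | _ s ih =>
  by_cases hsharp0 : ∃ l ∈ s, ∃ V, IsOpen V ∧ V ⊆ W ∧ Sharp0 f (P \ C l) (F (k + 1)) V
  · obtain ⟨l, hl, V, hV, hVW, hV0⟩ := hsharp0
    obtain ⟨W₁, hW₁, hW₁V, hW₁ne, hW₁k⟩ : ∃ W₁, IsOpen W₁ ∧ W₁ ⊆ V ∧ (W₁ ∩ F (k + 1)).Nonempty ∧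
        ∀ U, IsOpen U → U ⊆ W₁ → ¬ Sharp f (P \ C l) F k U := by
      by_contra! hrec
      exact hs l hl ⟨V, hV, hVW, hV0, hrec⟩
    obtain ⟨W', hW', hW'W₁, hW'ne, s', hs's, hcard, hs'⟩ :=
      ih (s.erase l) (Finset.erase_ssubset hl) (h.mono (hW₁V.trans hVW) hW₁ne) hW₁
        fun l' hl' ⟨U, hU, hUW₁, hUs⟩ =>
          hs l' (Finset.mem_of_mem_erase hl') ⟨U, hU, hUW₁.trans (hW₁V.trans hVW), hUs⟩
    have hl' : l ∉ s' := fun hl' => Finset.notMem_erase l s (hs's hl')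
    refine ⟨W', hW', hW'W₁.trans (hW₁V.trans hVW), hW'ne, insert l s',
      Finset.insert_subset hl (hs's.trans (Finset.erase_subset l s)), ?_, ?_⟩
    · rw [Finset.card_insert_of_notMem hl']
      have := Finset.card_erase_add_one hl
      omega
    · rintro l' hl' ⟨U, hU, hUW', hUs⟩
      rcases Finset.mem_insert.1 hl' with rfl | hl'
      · exact hW₁k U hU (hUW'.trans hW'W₁) hUs
      · exact hs' l' hl' ⟨U, hU, hUW', hUs⟩
  · refine ⟨W, hW, subset_rfl, h.1, ∅, Finset.empty_subset s, ?_, by simp⟩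
    have := h.card_le_one hf hW hC hCcl fun l hl hex => hsharp0 ⟨l, hl, hex⟩
    simpa using this

lemma Sharp.card_le [PerfectlyNormalSpace X] {f : X → Y} (hf : Sigma3Measurable f) {P : Set Y}
    {F : ℕ → Set X} {ι : Type*} {C : ι → Set Y} (hC : Pairwise (Disjoint on C))
    (hCcl : ∀ l, IsClosed (Subtype.val ⁻¹' C l : Set P)) {k : ℕ} {U : Set X}
    (h : Sharp f P F k U) (hU : IsOpen U) {t : Finset ι}
    (ht : ∀ l ∈ t, ¬ ∃ V, IsOpen V ∧ V ⊆ U ∧ Sharp f (P \ C l) F k V) : t.card ≤ k + 1 := by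
  induction k generalizing U t with
  | zero => exact Sharp0.card_le_one hf h hU hC hCcl ht
  | succ k ih =>
    obtain ⟨h0, hrec⟩ := h
    obtain ⟨W', hW', hW'U, hW'ne, s', -, hcard, hs'⟩ :=
      h0.exists_open_subset_not_sharp hf hC hCcl t hU ht
    obtain ⟨W'', hW'', hW''W', hW''k⟩ := hrec W' hW' hW'U hW'ne
    have := ih hW''k hW'' fun l hl ⟨V, hV, hVW'', hVs⟩ => hs' l hl ⟨V, hV, hVW''.trans hW''W', hVs⟩
    omega

end Sharpness

theorem stmt10_general {X Y : Type*} [TopologicalSpace X] [PolishSpace X]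
    [TopologicalSpace Y]
    (f : X → Y) (hf : Sigma3Measurable f)
    (k : ℕ) (F : ℕ → Set X)
    (P : Set Y) (U : Set X) (hU : IsOpen U)
    (hsharp : Sharp f P F k U)
    (m : ℕ) (C : Fin m → Set Y)
    (hCdisj : ∀ l₁ l₂, l₁ ≠ l₂ → Disjoint (C l₁) (C l₂))
    (hCcl : ∀ l, IsClosed ((Subtype.val ⁻¹' (C l)) : Set P)) :
    {l : Fin m | ¬ ∃ U' : Set X, IsOpen U' ∧ U' ⊆ U ∧ Sharp f (P \ C l) F k U'}.ncard
      ≤ k + 1 := by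
  classical
  rw [Set.ncard_eq_toFinset_card']
  exact hsharp.card_le hf hCdisj hCcl hU fun l hl => Set.mem_toFinset.1 hl

/-- Lemma 3.4 (Lemma `sharp`): at most `k + 1` of the sets `C l` can destroy sharpness. -/
theorem stmt10 {X Y : Type*} [TopologicalSpace X] [PolishSpace X]
    [TopologicalSpace Y] [TopologicalSpace.SeparableSpace Y]
    [TopologicalSpace.MetrizableSpace Y]
    (f : X → Y) (hf : Sigma3Measurable f)
    (k : ℕ) (F : ℕ → Set X) (hFcl : ∀ i ≤ k, IsClosed (F i))
    (hFmono : ∀ i j, i ≤ j → j ≤ k → F j ⊆ F i)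
    (P : Set Y) (U : Set X) (hU : IsOpen U)
    (hsharp : Sharp f P F k U)
    (m : ℕ) (C : Fin m → Set Y)
    (hCsub : ∀ l, C l ⊆ P)
    (hCdisj : ∀ l₁ l₂, l₁ ≠ l₂ → Disjoint (C l₁) (C l₂))
    (hCcl : ∀ l, IsClosed ((Subtype.val ⁻¹' (C l)) : Set P)) :
    {l : Fin m | ¬ ∃ U' : Set X, IsOpen U' ∧ U' ⊆ U ∧ Sharp f (P \ C l) F k U'}.ncard
      ≤ k + 1 :=
  stmt10_general f hf k F P U hU hsharp m C hCdisj hCcl
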